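/- Let f : D → ℂ be the extension of a holomorphic function f on the unit disc defined for |z| > 1 by f(z) = f(1/z̄) + f'(1/z̄)(z - 1/z̄). Then at every point z with |z| > 1 where f is real-differentiable, the Beltrami coefficient μ(z) = ∂_{z̄}f(z)/∂_z f(z) satisfies μ(z) = -(1/z̄²)(z - 1/z̄) · f''(1/z̄)/f'(1/z̄), and consequently |μ(z)| = ((|z|+1)/|z|²) · (1 - |1/z̄|) · |f''(1/z̄)/f'(1/z̄)|. -/

import Mathlib

open Complex Metric

/-- The Wirtinger derivative `∂_z F` of a map `F : ℂ → ℂ` at `z`. -/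
noncomputable def wirtingerZ (F : ℂ → ℂ) (z : ℂ) : ℂ :=
  (fderiv ℝ F z 1 - Complex.I * fderiv ℝ F z Complex.I) / 2

/-- The Wirtinger derivative `∂_z̄ F` of a map `F : ℂ → ℂ` at `z`. -/
noncomputable def wirtingerZbar (F : ℂ → ℂ) (z : ℂ) : ℂ :=
  (fderiv ℝ F z 1 + Complex.I * fderiv ℝ F z Complex.I) / 2

/-!
With `w = 1/z̄`, the extension is `f(w) + f'(w)(z - w)`, and `z ↦ w` is antiholomorphic with
`∂_z̄ w = -1/z̄²`. By the chain rule the `dz̄`-terms coming from `f(w)` and from `-f'(w) w` cancel,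
so `dF = f'(w) dz - (1/z̄²) f''(w)(z - w) dz̄`, which gives `∂_z F = f'(w)` and
`∂_z̄ F = -(1/z̄²) f''(w)(z - w)`. The modulus follows from `|z - 1/z̄| = |z| - 1/|z|`.
-/

open ComplexConjugate Topology

section Wirtinger

variable {F : ℂ → ℂ} {z p q : ℂ}

theorem fderiv_apply_one_of_hasFDerivAt
    (h : HasFDerivAt F (p • ContinuousLinearMap.id ℝ ℂ + q • (conjCLE : ℂ →L[ℝ] ℂ)) z) :
    fderiv ℝ F z 1 = p + q := by
  simp [h.fderiv]

theorem fderiv_apply_I_of_hasFDerivAt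
    (h : HasFDerivAt F (p • ContinuousLinearMap.id ℝ ℂ + q • (conjCLE : ℂ →L[ℝ] ℂ)) z) :
    fderiv ℝ F z I = (p - q) * I := by
  simp only [h.fderiv, add_apply, smul_apply, ContinuousLinearMap.id_apply, smul_eq_mul,
    ContinuousLinearEquiv.coe_coe, ContinuousAlgEquiv.coeCLE_apply, conjCAE_apply, conj_I, mul_neg]
  ring

theorem wirtingerZ_eq_of_hasFDerivAt
    (h : HasFDerivAt F (p • ContinuousLinearMap.id ℝ ℂ + q • (conjCLE : ℂ →L[ℝ] ℂ)) z) :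
    wirtingerZ F z = p := by
  rw [wirtingerZ, fderiv_apply_one_of_hasFDerivAt h, fderiv_apply_I_of_hasFDerivAt h]
  linear_combination (q - p) / 2 * I_sq

theorem wirtingerZbar_eq_of_hasFDerivAt
    (h : HasFDerivAt F (p • ContinuousLinearMap.id ℝ ℂ + q • (conjCLE : ℂ →L[ℝ] ℂ)) z) :
    wirtingerZbar F z = q := by
  rw [wirtingerZbar, fderiv_apply_one_of_hasFDerivAt h, fderiv_apply_I_of_hasFDerivAt h]
  linear_combination (p - q) / 2 * I_sq

end Wirtinger

theorem hasFDerivAt_inv_conj {z : ℂ} (hz : z ≠ 0) :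
    HasFDerivAt (fun x : ℂ => (conj x)⁻¹) (-(conj z ^ 2)⁻¹ • (conjCLE : ℂ →L[ℝ] ℂ)) z := by
  have hinv := hasDerivAt_inv ((map_ne_zero conj).2 hz)
  exact hinv.comp_hasFDerivAt z conjCLE.hasFDerivAt

theorem norm_sub_inv_conj {z : ℂ} (hz : 1 ≤ ‖z‖) : ‖z - (conj z)⁻¹‖ = ‖z‖ - ‖z‖⁻¹ := by
  have hz0 : 0 < ‖z‖ := by linarith
  have h : z - (conj z)⁻¹ = ((1 - (‖z‖ ^ 2)⁻¹ : ℝ) : ℂ) * z := by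
    rw [Complex.inv_def, conj_conj, normSq_conj, normSq_eq_norm_sq]
    push_cast
    ring
  have hpos : 0 ≤ 1 - (‖z‖ ^ 2)⁻¹ := sub_nonneg.2 (inv_le_one_of_one_le₀ (one_le_pow₀ hz))
  rw [h, norm_mul, norm_real, Real.norm_of_nonneg hpos]
  field_simp

noncomputable def ahlforsWeillExtension (f : ℂ → ℂ) (z : ℂ) : ℂ :=
  f (conj z)⁻¹ + deriv f (conj z)⁻¹ * (z - (conj z)⁻¹)

theorem hasFDerivAt_ahlforsWeillExtension {f : ℂ → ℂ} {z : ℂ} (hz : z ≠ 0)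
    (hf : DifferentiableAt ℂ f (conj z)⁻¹) (hf' : DifferentiableAt ℂ (deriv f) (conj z)⁻¹) :
    HasFDerivAt (ahlforsWeillExtension f)
      (deriv f (conj z)⁻¹ • ContinuousLinearMap.id ℝ ℂ +
        (-(conj z ^ 2)⁻¹ * deriv (deriv f) (conj z)⁻¹ * (z - (conj z)⁻¹)) •
          (conjCLE : ℂ →L[ℝ] ℂ)) z := by
  have hσ := hasFDerivAt_inv_conj hz
  have hf₁ := hf.hasDerivAt.comp_hasFDerivAt z hσ
  have hf₂ := hf'.hasDerivAt.comp_hasFDerivAt z hσ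
  refine (hf₁.add (hf₂.mul ((hasFDerivAt_id z).sub hσ))).congr_fderiv ?_
  ext v
  simp only [Function.comp_apply, Pi.sub_apply, id_eq, add_apply, smul_apply,
    ContinuousLinearEquiv.coe_coe, ContinuousAlgEquiv.coeCLE_apply, conjCAE_apply, smul_eq_mul,
    neg_mul, mul_neg, sub_apply, ContinuousLinearMap.id_apply, sub_neg_eq_add]
  ring

theorem stmt_9_general (f F : ℂ → ℂ)
    (hf : DifferentiableOn ℂ f (Metric.ball (0 : ℂ) 1))
    (hF : ∀ z : ℂ, 1 < ‖z‖ →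
      F z = f (1 / (starRingEnd ℂ z)) +
        deriv f (1 / (starRingEnd ℂ z)) * (z - 1 / (starRingEnd ℂ z)))
    (z : ℂ) (hz : 1 < ‖z‖) :
    wirtingerZbar F z / wirtingerZ F z =
      -(1 / (starRingEnd ℂ z) ^ 2) * (z - 1 / (starRingEnd ℂ z)) *
        (deriv (deriv f) (1 / (starRingEnd ℂ z)) / deriv f (1 / (starRingEnd ℂ z))) ∧
    ‖wirtingerZbar F z / wirtingerZ F z‖ =
      (‖z‖ + 1) / (‖z‖) ^ 2 *
        (1 - ‖1 / (starRingEnd ℂ z)‖) *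
        ‖deriv (deriv f) (1 / (starRingEnd ℂ z)) /
          deriv f (1 / (starRingEnd ℂ z))‖ := by
  have hz₀ : z ≠ 0 := norm_pos_iff.1 (one_pos.trans hz)
  have hw : (conj z)⁻¹ ∈ ball (0 : ℂ) 1 := by
    simpa using inv_lt_one_of_one_lt₀ hz
  have hF_eq : F =ᶠ[𝓝 z] ahlforsWeillExtension f := by
    filter_upwards [(isOpen_lt continuous_const continuous_norm).mem_nhds hz] with x hx
    rw [hF x hx, ahlforsWeillExtension, one_div]
  have hderiv := (hasFDerivAt_ahlforsWeillExtension hz₀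
    (hf.differentiableAt (isOpen_ball.mem_nhds hw))
    ((hf.analyticOnNhd isOpen_ball).deriv _ hw).differentiableAt).congr_of_eventuallyEq hF_eq
  have hμ : wirtingerZbar F z / wirtingerZ F z =
      -(1 / conj z ^ 2) * (z - 1 / conj z) *
        (deriv (deriv f) (1 / conj z) / deriv f (1 / conj z)) := by
    rw [wirtingerZbar_eq_of_hasFDerivAt hderiv, wirtingerZ_eq_of_hasFDerivAt hderiv]
    simp only [one_div]
    ring
  refine ⟨hμ, ?_⟩
  rw [hμ, norm_mul, norm_mul, norm_neg]
  simp only [one_div, norm_inv, norm_pow, norm_conj, norm_sub_inv_conj hz.le]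
  field_simp
  ring

/-- For the reflection extension `F(z) = f(1/z̄) + f'(1/z̄)(z - 1/z̄)` of a holomorphic `f`
on the unit disc with nonvanishing derivative, at any point `|z| > 1` of real
differentiability the Beltrami coefficient `μ = ∂_z̄F/∂_zF` equals
`-(1/z̄²)(z - 1/z̄) f''(1/z̄)/f'(1/z̄)`, and consequently
`|μ(z)| = ((|z|+1)/|z|²)(1 - |1/z̄|)|f''(1/z̄)/f'(1/z̄)|`. -/
theorem stmt_9 (f F : ℂ → ℂ)
    (hf : DifferentiableOn ℂ f (Metric.ball (0 : ℂ) 1))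
    (hf' : ∀ w ∈ Metric.ball (0 : ℂ) 1, deriv f w ≠ 0)
    (hF : ∀ z : ℂ, 1 < ‖z‖ →
      F z = f (1 / (starRingEnd ℂ z)) +
        deriv f (1 / (starRingEnd ℂ z)) * (z - 1 / (starRingEnd ℂ z)))
    (z : ℂ) (hz : 1 < ‖z‖) (hdiff : DifferentiableAt ℝ F z) :
    wirtingerZbar F z / wirtingerZ F z =
      -(1 / (starRingEnd ℂ z) ^ 2) * (z - 1 / (starRingEnd ℂ z)) *
        (deriv (deriv f) (1 / (starRingEnd ℂ z)) / deriv f (1 / (starRingEnd ℂ z))) ∧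
    ‖wirtingerZbar F z / wirtingerZ F z‖ =
      (‖z‖ + 1) / (‖z‖) ^ 2 *
        (1 - ‖1 / (starRingEnd ℂ z)‖) *
        ‖deriv (deriv f) (1 / (starRingEnd ℂ z)) /
          deriv f (1 / (starRingEnd ℂ z))‖ :=
  stmt_9_general f F hf hF z hz
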